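/- Let J : ℝ^n × ℝ^n → ℝ be continuously differentiable and let ū ∈ ℝ^n be a local minimizer of u ↦ J(S(u), u) over all of ℝ^n, with ȳ = S(ū). Then there exist q ∈ ℝ^{m×d}, p ∈ ℝ^n and μ ∈ ℝ^n such that: Aȳ + 𝕂*q = ū, ⟨q_j, (𝕂ȳ)_j⟩ = |(𝕂ȳ)_j| and |q_j| ≤ 1 for all j = 1,…,m; ⟨Ap, v⟩ + ∑_{j∈ℐ(ȳ)} ⟨T_j (𝕂p)_j, (𝕂v)_j⟩ = ⟨∇_y J(ȳ, ū) − μ, v⟩ for all v ∈ ℝ^n, where T_j := (1/|(𝕂ȳ)_j|)(I − (𝕂ȳ)_j (𝕂ȳ)_jᵀ/|(𝕂ȳ)_j|²); p ∈ 𝒦(ȳ); ⟨μ, φ⟩ ≥ 0 for all φ ∈ 𝒦(ȳ); and p + ∇_u J(ȳ, ū) = 0. -/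

import Mathlib

/-!
By the variational inequality, `𝕂w ↦ ⟪ū - Aȳ, w⟫` is well defined on the range of `𝕂` and
dominated there by the sublinear directional derivative of `B ↦ ∑ⱼ |Bⱼ|` at `𝕂ȳ`; the Riesz
representative of a Hahn–Banach extension is the slack `q`.

`S` is Lipschitz, and it is directionally differentiable with `S'(ū; h)` the solution `η` of the
variational inequality of the first kind on `𝒦(ȳ)`: expanding to second order the energy that
`S(ū + s h)` minimizes shows that every cluster point of the difference quotients minimizes the
strongly convex `f_ȳ` over `𝒦(ȳ)`. Local optimality of `ū` then gives
`⟪∇_y J, η⟫ + ⟪∇_u J, h⟫ ≥ 0` for all such pairs `(h, η)`. The pairs `(-δ, 0)` with `δ` in the dual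
cone of `𝒦(ȳ)` give `p = -∇_u J ∈ 𝒦(ȳ)` by Farkas' lemma, and the pairs `(Av + 𝕂*T𝕂v, v)` with
`v ∈ 𝒦(ȳ)` give `⟪μ, v⟫ ≥ 0` for `μ = ∇_y J - Ap - 𝕂*T𝕂p`.
-/

open scoped RealInnerProductSpace BigOperators Classical Topology

noncomputable section

abbrev Euc (n : ℕ) := EuclideanSpace ℝ (Fin n)
abbrev Rows (m d : ℕ) := PiLp 2 (fun _ : Fin m => EuclideanSpace ℝ (Fin d))

variable {n m d : ℕ}

/-- `y` solves the variational inequality VI(u). -/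
def IsVISol (A : Euc n →ₗ[ℝ] Euc n) (K : Euc n →ₗ[ℝ] Rows m d) (u y : Euc n) : Prop :=
  ∀ v : Euc n, ⟪A y, v - y⟫ + ∑ j, (‖K v j‖ - ‖K y j‖) ≥ ⟪u, v - y⟫

/-- `q` is a slack variable for the pair `(u, y)`: primal-dual system. -/
def IsSlack (A : Euc n →ₗ[ℝ] Euc n) (K : Euc n →ₗ[ℝ] Rows m d) (u y : Euc n)
    (q : Rows m d) : Prop :=
  A y + (LinearMap.adjoint K) q = u ∧ (∀ j, ⟪q j, K y j⟫ = ‖K y j‖) ∧ ∀ j, ‖q j‖ ≤ 1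

/-- The complementarity relations alone. -/
def ComplQ (K : Euc n →ₗ[ℝ] Rows m d) (y : Euc n) (q : Rows m d) : Prop :=
  (∀ j, ⟪q j, K y j⟫ = ‖K y j‖) ∧ ∀ j, ‖q j‖ ≤ 1

/-- The cone `𝒦(y)` defined via a slack variable `q`. -/
def KconeQ (K : Euc n →ₗ[ℝ] Rows m d) (y : Euc n) (q : Rows m d) : Set (Euc n) :=
  {v | (∀ j, ‖q j‖ < 1 → K v j = 0) ∧
       ∀ j, ‖q j‖ = 1 → K y j = 0 → ⟪q j, K v j⟫ = ‖K v j‖}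

/-- `∑_{j∈ℐ(y)} ⟨(𝕂y)_j/|(𝕂y)_j|, (𝕂v)_j⟩ + ∑_{j∈𝒜(y)} |(𝕂v)_j|`. -/
def dirRHS (K : Euc n →ₗ[ℝ] Rows m d) (y v : Euc n) : ℝ :=
  ∑ j, if K y j ≠ 0 then ⟪(‖K y j‖)⁻¹ • K y j, K v j⟫ else ‖K v j‖

/-- The cone `𝒦(y)` in its slack-variable-free form. -/
def Kcone (A : Euc n →ₗ[ℝ] Euc n) (K : Euc n →ₗ[ℝ] Rows m d) (u y : Euc n) : Set (Euc n) :=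
  {v | ⟪u - A y, v⟫ ≥ dirRHS K y v}

/-- Second order term `∑_{j∈ℐ(y)} ⟨(𝕂η)_j/|(𝕂y)_j| − ⟨(𝕂y)_j,(𝕂η)_j⟩(𝕂y)_j/|(𝕂y)_j|³, (𝕂w)_j⟩`. -/
def secondForm (K : Euc n →ₗ[ℝ] Rows m d) (y η w : Euc n) : ℝ :=
  ∑ j, if K y j ≠ 0 then
      ⟪(‖K y j‖)⁻¹ • K η j - ((⟪K y j, K η j⟫) / ‖K y j‖ ^ 3) • K y j, K w j⟫
    else 0

/-- The quadratic functional `f_y` whose minimizer over `𝒦(y)` is the directional derivative. -/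
def fy (A : Euc n →ₗ[ℝ] Euc n) (K : Euc n →ₗ[ℝ] Rows m d) (y h η : Euc n) : ℝ :=
  (1 / 2) * ⟪η, A η⟫ - ⟪h, η⟫ +
    (1 / 2) * ∑ j, if K y j ≠ 0 then
        ‖K η j‖ ^ 2 / ‖K y j‖ - (⟪K y j, K η j⟫) ^ 2 / ‖K y j‖ ^ 3
      else 0

/-- `η` solves the VI of the first kind characterizing the directional derivative. -/
def VI1Sol (A : Euc n →ₗ[ℝ] Euc n) (K : Euc n →ₗ[ℝ] Rows m d) (u y h η : Euc n) : Prop :=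
  η ∈ Kcone A K u y ∧ ∀ v ∈ Kcone A K u y,
    ⟪A η, v - η⟫ + secondForm K y η (v - η) ≥ ⟪h, v - η⟫

/-- Bouligand subdifferential of a map `S` at `u`. -/
def BSubdiff (S : Euc n → Euc n) (u : Euc n) : Set (Euc n →L[ℝ] Euc n) :=
  {G | ∃ (uk : ℕ → Euc n) (Gk : ℕ → (Euc n →L[ℝ] Euc n)),
    (∀ k, HasFDerivAt S (Gk k) (uk k)) ∧
    Filter.Tendsto uk Filter.atTop (nhds u) ∧
    Filter.Tendsto Gk Filter.atTop (nhds G)}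

/-- Biactive set associated with `y` and a slack variable `q`. -/
def Biactive (K : Euc n →ₗ[ℝ] Rows m d) (y : Euc n) (q : Rows m d) : Set (Fin m) :=
  {j | K y j = 0 ∧ ‖q j‖ = 1}

/-- The subspace `V` associated with a splitting `ℬ₀ ∪ ℬ₁` of the biactive set. -/
def Vsub (K : Euc n →ₗ[ℝ] Rows m d) (q : Rows m d) (B0 B1 : Set (Fin m)) : Set (Euc n) :=
  {v | (∀ j, ‖q j‖ < 1 → K v j = 0) ∧ (∀ j ∈ B0, K v j = 0) ∧
       ∀ j ∈ B1, ∃ c : ℝ, K v j = c • q j}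

open Filter

section NormExpansion

variable {E : Type*} [NormedAddCommGroup E] [InnerProductSpace ℝ E]

def normHess (a b c : E) : ℝ := ⟪‖a‖⁻¹ • b - (⟪a, b⟫ / ‖a‖ ^ 3) • a, c⟫

-- `‖a + t • b‖ - ‖a‖ - t * ⟪‖a‖⁻¹ • a, b⟫`, rationalized and divided by `t ^ 2`.
def normRemainder (t : ℝ) (a b : E) : ℝ :=
  (‖b‖ ^ 2 - ⟪‖a‖⁻¹ • a, b⟫ ^ 2) / (‖a + t • b‖ + ‖a‖ + t * ⟪‖a‖⁻¹ • a, b⟫)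

lemma abs_inner_inv_norm_smul_le (a b : E) : |⟪‖a‖⁻¹ • a, b⟫| ≤ ‖b‖ := by
  refine (abs_real_inner_le_norm _ _).trans (mul_le_of_le_one_left (norm_nonneg b) ?_)
  rw [norm_smul, norm_inv, norm_norm]
  exact inv_mul_le_one_of_le₀ le_rfl (norm_nonneg a)

lemma normHess_eq (a b c : E) :
    normHess a b c = ‖a‖⁻¹ * ⟪b, c⟫ - ⟪a, b⟫ * ⟪a, c⟫ / ‖a‖ ^ 3 := by
  rw [normHess, inner_sub_left, real_inner_smul_left, real_inner_smul_left]
  ring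

lemma inner_inv_norm_smul_sub_eq_normHess (a b c : E) :
    ⟪‖a‖⁻¹ • (b - (⟪a, b⟫ / ‖a‖ ^ 2) • a), c⟫ = normHess a b c := by
  rw [normHess_eq, real_inner_smul_left, inner_sub_left, real_inner_smul_left]
  ring

lemma normHess_self (a b : E) : normHess a b b = ‖b‖ ^ 2 / ‖a‖ - ⟪a, b⟫ ^ 2 / ‖a‖ ^ 3 := by
  rw [normHess_eq, real_inner_self_eq_norm_sq]
  ring

lemma normHess_comm (a b c : E) : normHess a b c = normHess a c b := by
  rw [normHess_eq, normHess_eq, real_inner_comm c b]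
  ring

lemma normHess_self_nonneg (a b : E) : 0 ≤ normHess a b b := by
  have h : normHess a b b = ‖a‖⁻¹ * (‖b‖ ^ 2 - ⟪‖a‖⁻¹ • a, b⟫ ^ 2) := by
    rw [normHess_self, real_inner_smul_left]
    ring
  rw [h, ← sq_abs ⟪_, b⟫]
  have := abs_inner_inv_norm_smul_le a b
  exact mul_nonneg (by positivity) (sub_nonneg.mpr (by gcongr))

lemma normHess_polarization (a b c : E) :
    normHess a c c / 2 =
      normHess a b b / 2 + normHess a b (c - b) + normHess a (c - b) (c - b) / 2 := by
  simp only [normHess_eq, inner_sub_left, inner_sub_right, real_inner_comm b c]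
  ring

lemma norm_add_smul_sub_eq {a b : E} {t : ℝ} (ha : a ≠ 0) (ht : 0 ≤ t) (hsmall : t * ‖b‖ < ‖a‖) :
    ‖a + t • b‖ - ‖a‖ - t * ⟪‖a‖⁻¹ • a, b⟫ = t ^ 2 * normRemainder t a b := by
  set c := ⟪‖a‖⁻¹ • a, b⟫
  have hna : 0 < ‖a‖ := norm_pos_iff.mpr ha
  have hc : |c| ≤ ‖b‖ := abs_inner_inv_norm_smul_le a b
  have hac : ‖a‖ * c = ⟪a, b⟫ := by
    simp only [c, real_inner_smul_left]; field_simp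
  have hsq : ‖a + t • b‖ ^ 2 = ‖a‖ ^ 2 + 2 * t * ⟪a, b⟫ + t ^ 2 * ‖b‖ ^ 2 := by
    rw [norm_add_sq_real, inner_smul_right, norm_smul, Real.norm_eq_abs, abs_of_nonneg ht]
    ring
  have hlow : ‖a‖ - t * ‖b‖ ≤ ‖a + t • b‖ := by
    have := norm_sub_norm_le a (-(t • b))
    rw [sub_neg_eq_add, norm_neg, norm_smul, Real.norm_eq_abs, abs_of_nonneg ht] at this
    linarith
  -- the denominator is at least `2 (‖a‖ - t ‖b‖)`
  have hD : 0 < ‖a + t • b‖ + ‖a‖ + t * c := by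
    nlinarith [neg_abs_le c]
  rw [normRemainder, mul_div_assoc', eq_div_iff hD.ne']
  nlinarith

lemma normRemainder_zero {a : E} (ha : a ≠ 0) (b : E) :
    normRemainder 0 a b = normHess a b b / 2 := by
  have hna : 0 < ‖a‖ := norm_pos_iff.mpr ha
  rw [normRemainder, normHess_eq, real_inner_smul_left, real_inner_self_eq_norm_sq]
  simp only [zero_smul, add_zero, zero_mul]
  field_simp
  ring

lemma continuousAt_normRemainder {a : E} (ha : a ≠ 0) (b : E) :
    ContinuousAt (fun p : ℝ × E => normRemainder p.1 a p.2) (0, b) := by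
  have hna : 0 < ‖a‖ := norm_pos_iff.mpr ha
  refine ContinuousAt.div (by fun_prop) (by fun_prop) ?_
  simp only [zero_smul, add_zero, zero_mul]
  positivity

end NormExpansion

section RowSums

variable {n m d : ℕ}

-- Cached: searching for this instance times out when it arises from a linear map into `Rows m d`.
instance : ContinuousSMul ℝ (Rows m d) := inferInstance

def rowNormSum (K : Euc n →ₗ[ℝ] Rows m d) (v : Euc n) : ℝ := ∑ j, ‖K v j‖

def dirNormRows (Y B : Rows m d) : ℝ :=
  ∑ j, if Y j ≠ 0 then ⟪(‖Y j‖)⁻¹ • Y j, B j⟫ else ‖B j‖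

def remainderSum (K : Euc n →ₗ[ℝ] Rows m d) (y : Euc n) (t : ℝ) (x : Euc n) : ℝ :=
  ∑ j, if K y j ≠ 0 then normRemainder t (K y j) (K x j) else 0

-- The rows `T_j X_j` of the paper's `𝕂* T 𝕂`, for `X = 𝕂 x`.
def hessRows (Y X : Rows m d) : Rows m d :=
  WithLp.toLp 2 fun j => if Y j ≠ 0 then (‖Y j‖)⁻¹ • X j - (⟪Y j, X j⟫ / ‖Y j‖ ^ 3) • Y j else 0

lemma secondForm_eq (K : Euc n →ₗ[ℝ] Rows m d) (y x v : Euc n) :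
    secondForm K y x v = ∑ j, if K y j ≠ 0 then normHess (K y j) (K x j) (K v j) else 0 := rfl

lemma dirNormRows_add_le (Y B C : Rows m d) :
    dirNormRows Y (B + C) ≤ dirNormRows Y B + dirNormRows Y C := by
  rw [dirNormRows, dirNormRows, dirNormRows, ← Finset.sum_add_distrib]
  refine Finset.sum_le_sum fun j _ => ?_
  split_ifs
  · rw [PiLp.add_apply, inner_add_right]
  · exact norm_add_le _ _

lemma dirNormRows_smul (Y B : Rows m d) {c : ℝ} (hc : 0 ≤ c) :
    dirNormRows Y (c • B) = c * dirNormRows Y B := by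
  rw [dirNormRows, dirNormRows, Finset.mul_sum]
  refine Finset.sum_congr rfl fun j _ => ?_
  split_ifs
  · rw [PiLp.smul_apply, inner_smul_right]
  · rw [PiLp.smul_apply, norm_smul, Real.norm_eq_abs, abs_of_nonneg hc]

lemma continuous_dirNormRows (Y : Rows m d) : Continuous (dirNormRows Y) := by
  refine continuous_finsetSum _ fun j _ => ?_
  split_ifs
  · exact continuous_const.inner (PiLp.continuous_apply 2 _ j)
  · exact (PiLp.continuous_apply 2 _ j).norm

lemma continuous_row_apply (K : Euc n →ₗ[ℝ] Rows m d) (j : Fin m) :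
    Continuous fun v : Euc n => K v j :=
  (PiLp.continuous_apply 2 _ j).comp K.continuous_of_finiteDimensional

lemma continuous_dirRHS (K : Euc n →ₗ[ℝ] Rows m d) (y : Euc n) : Continuous (dirRHS K y) :=
  (continuous_dirNormRows (K y)).comp K.continuous_of_finiteDimensional

lemma rowNormSum_add_smul_sub (K : Euc n →ₗ[ℝ] Rows m d) (y x : Euc n) {t : ℝ} (ht : 0 < t)
    (hsmall : ∀ j, K y j ≠ 0 → t * ‖K x j‖ < ‖K y j‖) :
    rowNormSum K (y + t • x) - rowNormSum K y =
      t * dirRHS K y x + t ^ 2 * remainderSum K y t x := by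
  rw [rowNormSum, rowNormSum, dirRHS, remainderSum, Finset.mul_sum, Finset.mul_sum,
    ← Finset.sum_add_distrib, ← Finset.sum_sub_distrib]
  refine Finset.sum_congr rfl fun j _ => ?_
  rw [map_add, map_smul, PiLp.add_apply, PiLp.smul_apply]
  split_ifs with hj
  · linarith [norm_add_smul_sub_eq hj ht.le (hsmall j hj)]
  · rw [not_not] at hj
    rw [hj, zero_add, norm_zero, norm_smul, Real.norm_eq_abs, abs_of_pos ht]
    ring

lemma eventually_smul_norm_lt {ι : Type*} {l : Filter ι} (K : Euc n →ₗ[ℝ] Rows m d) (y : Euc n)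
    {t : ι → ℝ} (ht : Tendsto t l (𝓝 0)) {w : ι → Euc n} {L : Euc n} (hw : Tendsto w l (𝓝 L)) :
    ∀ᶠ i in l, ∀ j, K y j ≠ 0 → t i * ‖K (w i) j‖ < ‖K y j‖ := by
  rw [eventually_all]
  intro j
  by_cases hj : K y j = 0
  · exact Eventually.of_forall fun _ h => absurd hj h
  have hlim : Tendsto (fun i => t i * ‖K (w i) j‖) l (𝓝 (0 * ‖K L j‖)) :=
    ht.mul (((continuous_row_apply K j).norm.tendsto L).comp hw)
  rw [zero_mul] at hlim
  exact (hlim.eventually_lt_const (norm_pos_iff.mpr hj)).mono fun _ hi _ => hi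

lemma tendsto_remainderSum {ι : Type*} {l : Filter ι} (K : Euc n →ₗ[ℝ] Rows m d) (y : Euc n)
    {t : ι → ℝ} (ht : Tendsto t l (𝓝 0)) {w : ι → Euc n} {L : Euc n} (hw : Tendsto w l (𝓝 L)) :
    Tendsto (fun i => remainderSum K y (t i) (w i)) l (𝓝 (secondForm K y L L / 2)) := by
  rw [secondForm_eq, Finset.sum_div]
  refine tendsto_finsetSum _ fun j _ => ?_
  split_ifs with hj
  · rw [← normRemainder_zero hj]
    have hrow : Tendsto (fun i => K (w i) j) l (𝓝 (K L j)) :=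
      ((continuous_row_apply K j).tendsto L).comp hw
    exact ((continuousAt_normRemainder hj (K L j)).tendsto.comp (ht.prodMk_nhds hrow) :)
  · simpa using tendsto_const_nhds

end RowSums

section SecondForm

variable {n m d : ℕ} (K : Euc n →ₗ[ℝ] Rows m d) (y : Euc n)

lemma secondForm_comm (x v : Euc n) : secondForm K y x v = secondForm K y v x := by
  simp only [secondForm_eq, normHess_comm _ (K x _)]

lemma secondForm_self_nonneg (x : Euc n) : 0 ≤ secondForm K y x x := by
  rw [secondForm_eq]
  refine Finset.sum_nonneg fun j _ => ?_
  split_ifs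
  · exact normHess_self_nonneg _ _
  · exact le_rfl

lemma secondForm_polarization (x z : Euc n) :
    secondForm K y z z / 2 =
      secondForm K y x x / 2 + secondForm K y x (z - x) + secondForm K y (z - x) (z - x) / 2 := by
  simp only [secondForm_eq, Finset.sum_div, ← Finset.sum_add_distrib]
  refine Finset.sum_congr rfl fun j _ => ?_
  split_ifs
  · rw [map_sub, PiLp.sub_apply, normHess_polarization]
  · simp

lemma fy_eq (A : Euc n →ₗ[ℝ] Euc n) (h x : Euc n) :
    fy A K y h x = (1 / 2) * ⟪x, A x⟫ - ⟪h, x⟫ + (1 / 2) * secondForm K y x x := by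
  simp only [fy, secondForm_eq, normHess_self]

lemma inner_adjoint_hessRows (x v : Euc n) :
    ⟪LinearMap.adjoint K (hessRows (K y) (K x)), v⟫ = secondForm K y x v := by
  rw [LinearMap.adjoint_inner_left, PiLp.inner_apply, secondForm_eq]
  refine Finset.sum_congr rfl fun j _ => ?_
  simp only [hessRows, PiLp.toLp_apply]
  split_ifs
  · rfl
  · exact inner_zero_left _

lemma inner_adjoint_hessRows_comm (x v : Euc n) :
    ⟪LinearMap.adjoint K (hessRows (K y) (K x)), v⟫ =
      ⟪x, LinearMap.adjoint K (hessRows (K y) (K v))⟫ := by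
  rw [inner_adjoint_hessRows, secondForm_comm, ← inner_adjoint_hessRows, real_inner_comm]

end SecondForm

lemma sum_inner_inv_norm_smul_sub_eq_secondForm {n m d : ℕ} (K : Euc n →ₗ[ℝ] Rows m d)
    (y x v : Euc n) :
    (∑ j, if K y j ≠ 0 then
        ⟪(‖K y j‖)⁻¹ • (K x j - ((⟪K y j, K x j⟫) / ‖K y j‖ ^ 2) • K y j), K v j⟫
      else 0) = secondForm K y x v := by
  simp only [secondForm_eq, inner_inv_norm_smul_sub_eq_normHess]

section Quadratic

variable {E : Type*} [NormedAddCommGroup E] [InnerProductSpace ℝ E] {T : E →ₗ[ℝ] E}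

lemma LinearMap.IsSymmetric.inner_map_self_sub (hT : T.IsSymmetric) (x y : E) :
    ⟪x, T x⟫ - ⟪y, T y⟫ = 2 * ⟪T y, x - y⟫ + ⟪x - y, T (x - y)⟫ := by
  have hxy : ⟪y, T x⟫ = ⟪T y, x⟫ := (hT y x).symm
  simp only [map_sub, inner_sub_left, inner_sub_right, hxy, real_inner_comm (T y)]
  ring

lemma exists_pos_mul_norm_sq_le_inner [FiniteDimensional ℝ E]
    (hT : ∀ x : E, x ≠ 0 → 0 < ⟪x, T x⟫) : ∃ α > 0, ∀ x : E, α * ‖x‖ ^ 2 ≤ ⟪x, T x⟫ := by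
  rcases subsingleton_or_nontrivial E with hE | hE
  · exact ⟨1, one_pos, fun x => by simp [Subsingleton.elim x 0]⟩
  have hcont : Continuous fun x : E => ⟪x, T x⟫ := by
    have := T.continuous_of_finiteDimensional; fun_prop
  obtain ⟨x₀, hx₀, hmin⟩ := (isCompact_sphere (0 : E) 1).exists_isMinOn
    (NormedSpace.sphere_nonempty.mpr zero_le_one) hcont.continuousOn
  have hx₀ : ‖x₀‖ = 1 := by simpa using hx₀
  refine ⟨⟪x₀, T x₀⟫, hT x₀ (norm_ne_zero_iff.mp (by simp [hx₀])), fun x => ?_⟩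
  rcases eq_or_ne x 0 with rfl | hx
  · simp
  have hnx : 0 < ‖x‖ := norm_pos_iff.mpr hx
  have hunit : ‖x‖⁻¹ • x ∈ Metric.sphere (0 : E) 1 := by
    simp [norm_smul, hnx.ne']
  have := hmin hunit
  simp only [Set.mem_ofPred_eq, map_smul, real_inner_smul_left, real_inner_smul_right] at this
  calc ⟪x₀, T x₀⟫ * ‖x‖ ^ 2 ≤ ‖x‖⁻¹ * (‖x‖⁻¹ * ⟪x, T x⟫) * ‖x‖ ^ 2 := by gcongr
    _ = ⟪x, T x⟫ := by field_simp

end Quadratic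

section VariationalInequality

variable {n m d : ℕ} {A : Euc n →ₗ[ℝ] Euc n} {K : Euc n →ₗ[ℝ] Rows m d}

def energy (A : Euc n →ₗ[ℝ] Euc n) (K : Euc n →ₗ[ℝ] Rows m d) (u v : Euc n) : ℝ :=
  (1 / 2) * ⟪v, A v⟫ + rowNormSum K v - ⟪u, v⟫

lemma IsVISol.rowNormSum_sub_ge {u y : Euc n} (hy : IsVISol A K u y) (v : Euc n) :
    ⟪u - A y, v - y⟫ ≤ rowNormSum K v - rowNormSum K y := by
  have := hy v
  rw [Finset.sum_sub_distrib] at this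
  rw [inner_sub_left, rowNormSum, rowNormSum]
  linarith

lemma IsVISol.energy_le (hA : A.IsSymmetric) (hApos : ∀ x, 0 ≤ ⟪x, A x⟫) {u y : Euc n}
    (hy : IsVISol A K u y) (v : Euc n) : energy A K u y ≤ energy A K u v := by
  have hquad := hA.inner_map_self_sub v y
  have hvi := hy.rowNormSum_sub_ge v
  rw [inner_sub_left] at hvi
  have hu := inner_sub_right (𝕜 := ℝ) u v y
  rw [energy, energy]
  linarith [hApos (v - y)]

lemma IsVISol.inner_le_dirRHS {u y : Euc n} (hy : IsVISol A K u y) (x : Euc n) :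
    ⟪u - A y, x⟫ ≤ dirRHS K y x := by
  have ht : Tendsto (fun t : ℝ => t) (𝓝[>] 0) (𝓝 0) := nhdsWithin_le_nhds
  have hbound : ∀ᶠ t in 𝓝[>] (0 : ℝ), ⟪u - A y, x⟫ ≤ dirRHS K y x + t * remainderSum K y t x := by
    filter_upwards [eventually_smul_norm_lt K y ht tendsto_const_nhds, self_mem_nhdsWithin]
      with t hsmall (htpos : 0 < t)
    have hvi := hy.rowNormSum_sub_ge (y + t • x)
    rw [add_sub_cancel_left, inner_smul_right, rowNormSum_add_smul_sub K y x htpos hsmall] at hvi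
    nlinarith
  have hlim : Tendsto (fun t => dirRHS K y x + t * remainderSum K y t x) (𝓝[>] 0)
      (𝓝 (dirRHS K y x + 0 * (secondForm K y x x / 2))) :=
    tendsto_const_nhds.add (ht.mul (tendsto_remainderSum K y ht tendsto_const_nhds))
  rw [zero_mul, add_zero] at hlim
  exact ge_of_tendsto hlim hbound

lemma IsVISol.inner_map_sub_le {u₁ u₂ y₁ y₂ : Euc n} (hy₁ : IsVISol A K u₁ y₁)
    (hy₂ : IsVISol A K u₂ y₂) : ⟪y₁ - y₂, A (y₁ - y₂)⟫ ≤ ⟪u₁ - u₂, y₁ - y₂⟫ := by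
  have h₁ := hy₁.rowNormSum_sub_ge y₂
  have h₂ := hy₂.rowNormSum_sub_ge y₁
  rw [← neg_sub y₁ y₂, inner_neg_right] at h₁
  have : 0 ≤ ⟪u₁ - A y₁ - (u₂ - A y₂), y₁ - y₂⟫ := by rw [inner_sub_left]; linarith
  rw [real_inner_comm, map_sub]
  rw [show u₁ - A y₁ - (u₂ - A y₂) = (u₁ - u₂) - (A y₁ - A y₂) by abel, inner_sub_left] at this
  linarith

lemma IsVISol.mul_norm_sub_le {α : ℝ} (hA : ∀ x, α * ‖x‖ ^ 2 ≤ ⟪x, A x⟫) {u₁ u₂ y₁ y₂ : Euc n}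
    (hy₁ : IsVISol A K u₁ y₁) (hy₂ : IsVISol A K u₂ y₂) : α * ‖y₁ - y₂‖ ≤ ‖u₁ - u₂‖ := by
  rcases (norm_nonneg (y₁ - y₂)).eq_or_lt with h0 | hpos
  · rw [← h0, mul_zero]; exact norm_nonneg _
  refine le_of_mul_le_mul_right ?_ hpos
  calc α * ‖y₁ - y₂‖ * ‖y₁ - y₂‖ = α * ‖y₁ - y₂‖ ^ 2 := by ring
    _ ≤ ⟪u₁ - u₂, y₁ - y₂⟫ := (hA _).trans (hy₁.inner_map_sub_le hy₂)
    _ ≤ ‖u₁ - u₂‖ * ‖y₁ - y₂‖ := real_inner_le_norm _ _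

lemma energy_add_smul_sub (hA : A.IsSymmetric) (u h y x : Euc n) {t : ℝ} (ht : 0 < t)
    (hsmall : ∀ j, K y j ≠ 0 → t * ‖K x j‖ < ‖K y j‖) :
    energy A K (u + t • h) (y + t • x) - energy A K (u + t • h) y =
      t * (dirRHS K y x - ⟪u - A y, x⟫) +
        t ^ 2 * ((1 / 2) * ⟪x, A x⟫ - ⟪h, x⟫ + remainderSum K y t x) := by
  have hquad := hA.inner_map_self_sub (y + t • x) y
  have hg := rowNormSum_add_smul_sub K y x ht hsmall
  simp only [add_sub_cancel_left, map_smul, real_inner_smul_left, real_inner_smul_right] at hquad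
  have hlin : ⟪u + t • h, y + t • x⟫ - ⟪u + t • h, y⟫ = t * ⟪u, x⟫ + t ^ 2 * ⟪h, x⟫ := by
    rw [← inner_sub_right, add_sub_cancel_left, inner_add_left, real_inner_smul_left,
      real_inner_smul_right, real_inner_smul_right]
    ring
  rw [energy, energy, inner_sub_left]
  linear_combination (1 / 2 : ℝ) * hquad + hg - hlin

end VariationalInequality

section Slack

variable {n m d : ℕ}

lemma eq_of_forall_inner_le {E : Type*} [NormedAddCommGroup E] [InnerProductSpace ℝ E] {x y : E}
    (h : ∀ b, ⟪x, b⟫ ≤ ⟪y, b⟫) : x = y := by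
  have := h (x - y)
  rw [← sub_nonpos, ← inner_sub_left, real_inner_self_nonpos] at this
  exact sub_eq_zero.mp this

lemma norm_le_one_of_forall_inner_le {E : Type*} [NormedAddCommGroup E] [InnerProductSpace ℝ E]
    {x : E} (h : ∀ b, ⟪x, b⟫ ≤ ‖b‖) : ‖x‖ ≤ 1 := by
  have := h x
  rw [real_inner_self_eq_norm_sq] at this
  nlinarith [norm_nonneg x]

lemma dirNormRows_single (Y : Rows m d) (j : Fin m) (b : Euc d) :
    dirNormRows Y (PiLp.single 2 j b) = if Y j ≠ 0 then ⟪(‖Y j‖)⁻¹ • Y j, b⟫ else ‖b‖ := by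
  rw [dirNormRows, Finset.sum_eq_single j (fun i _ hij => by simp [hij])
    (by simp), PiLp.single_eq_same]

lemma complQ_of_forall_inner_le (K : Euc n →ₗ[ℝ] Rows m d) (y : Euc n) {q : Rows m d}
    (hq : ∀ B, ⟪q, B⟫ ≤ dirNormRows (K y) B) : ComplQ K y q := by
  have hrow : ∀ j b, ⟪q j, b⟫ ≤ if K y j ≠ 0 then ⟪(‖K y j‖)⁻¹ • K y j, b⟫ else ‖b‖ := by
    intro j b
    have := hq (PiLp.single 2 j b)
    rwa [PiLp.inner_apply, Finset.sum_eq_single j (fun i _ hij => by simp [hij]) (by simp),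
      PiLp.single_eq_same, dirNormRows_single] at this
  have hactive : ∀ j, K y j ≠ 0 → q j = (‖K y j‖)⁻¹ • K y j := fun j hj =>
    eq_of_forall_inner_le fun b => by simpa [hj] using hrow j b
  refine ⟨fun j => ?_, fun j => ?_⟩ <;> by_cases hj : K y j = 0
  · simp [hj]
  · have hnorm : 0 < ‖K y j‖ := norm_pos_iff.mpr hj
    rw [hactive j hj, real_inner_smul_left, real_inner_self_eq_norm_sq]
    field_simp
  · exact norm_le_one_of_forall_inner_le fun b => by simpa [hj] using hrow j b
  · rw [hactive j hj, norm_smul, norm_inv, norm_norm, inv_mul_cancel₀ (norm_ne_zero_iff.mpr hj)]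

lemma IsVISol.exists_isSlack {A : Euc n →ₗ[ℝ] Euc n} {K : Euc n →ₗ[ℝ] Rows m d} {u y : Euc n}
    (hy : IsVISol A K u y) : ∃ q, IsSlack A K u y q := by
  let e : Euc n →ₗ[ℝ] ℝ := innerₛₗ ℝ (u - A y)
  have hdir : ∀ w, e w ≤ dirRHS K y w := hy.inner_le_dirRHS
  have hker : LinearMap.ker K ≤ LinearMap.ker e := fun w hw => by
    have hK0 : ∀ v, K v = 0 → dirRHS K y v = 0 := fun v hv => by simp [dirRHS, hv]
    have h₁ := hdir w
    have h₂ := hdir (-w)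
    rw [LinearMap.mem_ker] at hw ⊢
    rw [hK0 w hw] at h₁
    rw [hK0 (-w) (by rw [map_neg, hw, neg_zero]), map_neg] at h₂
    linarith
  let f : Rows m d →ₗ.[ℝ] ℝ :=
    ⟨LinearMap.range K, (LinearMap.ker K).liftQ e hker ∘ₗ K.quotKerEquivRange.symm.toLinearMap⟩
  have hf : ∀ w (hw : K w ∈ f.domain), f ⟨K w, hw⟩ = e w := fun w hw => by
    simp [f, LinearMap.quotKerEquivRange_symm_apply_image]
  obtain ⟨g, hgf, hgN⟩ := exists_extension_of_le_sublinear f (dirNormRows (K y))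
    (fun c hc B => dirNormRows_smul _ _ hc.le) (dirNormRows_add_le (K y))
    (by rintro ⟨_, w, rfl⟩; exact (hf w ⟨w, rfl⟩).trans_le (hdir w))
  let q := (InnerProductSpace.toDual ℝ (Rows m d)).symm (LinearMap.toContinuousLinearMap g)
  have hq : ∀ B, ⟪q, B⟫ = g B := fun B => InnerProductSpace.toDual_symm_apply
  have hadj : LinearMap.adjoint K q = u - A y := ext_inner_right ℝ fun w => by
    rw [LinearMap.adjoint_inner_left, hq, hgf ⟨K w, w, rfl⟩]
    exact hf w ⟨w, rfl⟩
  obtain ⟨hcompl, hnorm⟩ := complQ_of_forall_inner_le K y fun B => (hq B).trans_le (hgN B)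
  exact ⟨q, by rw [hadj, add_sub_cancel], hcompl, hnorm⟩

end Slack

section Cone

variable {n m d : ℕ} {A : Euc n →ₗ[ℝ] Euc n} {K : Euc n →ₗ[ℝ] Rows m d} {u y : Euc n}

def Kcone.properCone (A : Euc n →ₗ[ℝ] Euc n) (K : Euc n →ₗ[ℝ] Rows m d) (u y : Euc n) :
    ProperCone ℝ (Euc n) where
  carrier := Kcone A K u y
  add_mem' {x z} hx hz := by
    change dirNormRows (K y) (K (x + z)) ≤ ⟪u - A y, x + z⟫
    rw [map_add, inner_add_right]
    exact (dirNormRows_add_le _ _ _).trans (add_le_add hx hz)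
  zero_mem' := by
    change dirNormRows (K y) (K 0) ≤ ⟪u - A y, 0⟫
    simp [dirNormRows]
  smul_mem' c x hx := by
    change dirNormRows (K y) (K ((c : ℝ) • x)) ≤ ⟪u - A y, (c : ℝ) • x⟫
    rw [map_smul, dirNormRows_smul _ _ c.2, inner_smul_right]
    exact mul_le_mul_of_nonneg_left hx c.2
  isClosed' := isClosed_le (continuous_dirRHS K y) (continuous_const.inner continuous_id)

lemma zero_mem_Kcone : (0 : Euc n) ∈ Kcone A K u y := (Kcone.properCone A K u y).zero_mem

lemma mem_Kcone_of_forall_inner_nonneg {p : Euc n}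
    (h : ∀ δ, (∀ z ∈ Kcone A K u y, 0 ≤ ⟪z, δ⟫) → 0 ≤ ⟪p, δ⟫) : p ∈ Kcone A K u y := by
  by_contra hp
  obtain ⟨δ, hδ, hpδ⟩ := (Kcone.properCone A K u y).hyperplane_separation' hp
  exact hpδ.not_ge (h δ hδ)

lemma VI1Sol.fy_add_le (hA : A.IsSymmetric) {h η z : Euc n} (hη : VI1Sol A K u y h η)
    (hz : z ∈ Kcone A K u y) : fy A K y h η + (1 / 2) * ⟪z - η, A (z - η)⟫ ≤ fy A K y h z := by
  have hquad := hA.inner_map_self_sub z η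
  have hpol := secondForm_polarization K y η z
  have hnonneg := secondForm_self_nonneg K y (z - η)
  have hvi := hη.2 z hz
  have hlin := inner_sub_right (𝕜 := ℝ) h z η
  rw [fy_eq, fy_eq]
  linarith

lemma vi1Sol_zero {δ : Euc n} (hδ : ∀ z ∈ Kcone A K u y, 0 ≤ ⟪z, δ⟫) :
    VI1Sol A K u y (-δ) 0 := by
  refine ⟨zero_mem_Kcone, fun z hz => ?_⟩
  have h0 : secondForm K y 0 z = 0 := by simp [secondForm_eq, normHess]
  rw [sub_zero, map_zero, inner_zero_left, h0, inner_neg_left, real_inner_comm]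
  linarith [hδ z hz]

lemma vi1Sol_self {v : Euc n} (hv : v ∈ Kcone A K u y) :
    VI1Sol A K u y (A v + LinearMap.adjoint K (hessRows (K y) (K v))) v := by
  refine ⟨hv, fun z _ => ?_⟩
  rw [inner_add_left, inner_adjoint_hessRows]

end Cone

section DirectionalDerivative

def dirQuot {E F : Type*} [AddCommGroup E] [Module ℝ E] [AddCommGroup F] [Module ℝ F]
    (S : E → F) (u h : E) (s : ℝ) : F :=
  s⁻¹ • (S (u + s • h) - S u)

lemma add_smul_dirQuot {E F : Type*} [AddCommGroup E] [Module ℝ E] [AddCommGroup F] [Module ℝ F]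
    (S : E → F) (u h : E) {s : ℝ} (hs : s ≠ 0) : S u + s • dirQuot S u h s = S (u + s • h) := by
  rw [dirQuot, smul_inv_smul₀ hs, add_sub_cancel]

variable {n m d : ℕ} {A : Euc n →ₗ[ℝ] Euc n} {K : Euc n →ₗ[ℝ] Rows m d}

def coneDefect (A : Euc n →ₗ[ℝ] Euc n) (K : Euc n →ₗ[ℝ] Rows m d) (u y x : Euc n) : ℝ :=
  dirRHS K y x - ⟪u - A y, x⟫

def fyApprox (A : Euc n →ₗ[ℝ] Euc n) (K : Euc n →ₗ[ℝ] Rows m d) (y h : Euc n) (t : ℝ)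
    (x : Euc n) : ℝ :=
  (1 / 2) * ⟪x, A x⟫ - ⟪h, x⟫ + remainderSum K y t x

lemma tendsto_fyApprox {ι : Type*} {l : Filter ι} (y h : Euc n) {t : ι → ℝ}
    (ht : Tendsto t l (𝓝 0)) {w : ι → Euc n} {L : Euc n} (hw : Tendsto w l (𝓝 L)) :
    Tendsto (fun i => fyApprox A K y h (t i) (w i)) l (𝓝 (fy A K y h L)) := by
  have hA : Continuous A := A.continuous_of_finiteDimensional
  rw [fy_eq, mul_comm (1 / 2 : ℝ) (secondForm K y L L), ← div_eq_mul_one_div]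
  refine Tendsto.add ?_ (tendsto_remainderSum K y ht hw)
  exact (((continuous_id.inner hA).tendsto L).comp hw).const_mul _ |>.sub
    (((continuous_const.inner continuous_id).tendsto L).comp hw)

lemma eventually_fyApprox_le (hA : A.IsSymmetric) (hApos : ∀ x, 0 ≤ ⟪x, A x⟫)
    {S : Euc n → Euc n} (hS : ∀ u, IsVISol A K u (S u)) (u h : Euc n) {l : Filter ℝ}
    (hl : l ≤ 𝓝[>] 0) {L : Euc n} (hL : Tendsto (dirQuot S u h) l (𝓝 L))
    {z : Euc n} (hz : z ∈ Kcone A K u (S u)) :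
    ∀ᶠ s in l, fyApprox A K (S u) h s (dirQuot S u h s) ≤ fyApprox A K (S u) h s z ∧
      coneDefect A K u (S u) (dirQuot S u h s) ≤
        s * (fyApprox A K (S u) h s z - fyApprox A K (S u) h s (dirQuot S u h s)) := by
  have ht : Tendsto (fun s : ℝ => s) l (𝓝 0) := hl.trans nhdsWithin_le_nhds
  have hγz : coneDefect A K u (S u) z ≤ 0 := sub_nonpos.mpr hz
  filter_upwards [eventually_smul_norm_lt K (S u) ht hL, eventually_smul_norm_lt K (S u) ht
    tendsto_const_nhds, hl self_mem_nhdsWithin] with s hsw hsz (hs : 0 < s)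
  -- `S (u + s • h) = S u + s • wₛ` beats `S u + s • z` in energy; expanding both to second order
  -- gives `s γ(wₛ) + s² ψₛ(wₛ) ≤ s γ(z) + s² ψₛ(z)` for `γ = coneDefect`, `ψₛ = fyApprox … s`,
  -- and `γ(wₛ) ≥ 0 ≥ γ(z)`.
  have hE := (hS (u + s • h)).energy_le hA hApos (S u + s • z)
  rw [← add_smul_dirQuot S u h hs.ne', ← sub_le_sub_iff_right (energy A K (u + s • h) (S u)),
    energy_add_smul_sub hA u h _ _ hs hsw, energy_add_smul_sub hA u h _ _ hs hsz] at hE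
  change s * coneDefect A K u (S u) (dirQuot S u h s) +
      s ^ 2 * fyApprox A K (S u) h s (dirQuot S u h s) ≤
    s * coneDefect A K u (S u) z + s ^ 2 * fyApprox A K (S u) h s z at hE
  have hγw : 0 ≤ coneDefect A K u (S u) (dirQuot S u h s) :=
    sub_nonneg.mpr ((hS u).inner_le_dirRHS _)
  have hsγz := mul_nonpos_of_nonneg_of_nonpos hs.le hγz
  refine ⟨le_of_mul_le_mul_left (a := s ^ 2) ?_ (by positivity),
    le_of_mul_le_mul_left (a := s) ?_ hs⟩
  · nlinarith
  · linarith

lemma mem_Kcone_and_fy_le_of_tendsto (hA : A.IsSymmetric) (hApos : ∀ x, 0 ≤ ⟪x, A x⟫)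
    {S : Euc n → Euc n} (hS : ∀ u, IsVISol A K u (S u)) (u h : Euc n) {l : Filter ℝ} [l.NeBot]
    (hl : l ≤ 𝓝[>] 0) {L : Euc n} (hL : Tendsto (dirQuot S u h) l (𝓝 L)) :
    L ∈ Kcone A K u (S u) ∧ ∀ z ∈ Kcone A K u (S u), fy A K (S u) h L ≤ fy A K (S u) h z := by
  have ht : Tendsto (fun s : ℝ => s) l (𝓝 0) := hl.trans nhdsWithin_le_nhds
  have hfyw := tendsto_fyApprox (A := A) (K := K) (S u) h ht hL
  have hfyz : ∀ z, Tendsto (fun s => fyApprox A K (S u) h s z) l (𝓝 (fy A K (S u) h z)) :=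
    fun z => tendsto_fyApprox (S u) h ht tendsto_const_nhds
  have hγ : Tendsto (fun s => coneDefect A K u (S u) (dirQuot S u h s)) l
      (𝓝 (coneDefect A K u (S u) L)) :=
    (((continuous_dirRHS K (S u)).sub (continuous_const.inner continuous_id)).tendsto L).comp hL
  refine ⟨?_, fun z hz => ?_⟩
  · have hlim : Tendsto (fun s => s * (fyApprox A K (S u) h s 0 -
        fyApprox A K (S u) h s (dirQuot S u h s))) l
        (𝓝 (0 * (fy A K (S u) h 0 - fy A K (S u) h L))) := ht.mul ((hfyz 0).sub hfyw)
    rw [zero_mul] at hlim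
    exact sub_nonpos.mp <| le_of_tendsto_of_tendsto hγ hlim
      ((eventually_fyApprox_le hA hApos hS u h hl hL zero_mem_Kcone).mono fun _ hs => hs.2)
  · exact le_of_tendsto_of_tendsto hfyw (hfyz z)
      ((eventually_fyApprox_le hA hApos hS u h hl hL hz).mono fun _ hs => hs.1)

theorem VI1Sol.tendsto_dirQuot (hA : A.IsSymmetric) (hApos : ∀ x, x ≠ 0 → 0 < ⟪x, A x⟫)
    {S : Euc n → Euc n} (hS : ∀ u, IsVISol A K u (S u)) {u h η : Euc n}
    (hη : VI1Sol A K u (S u) h η) : Tendsto (dirQuot S u h) (𝓝[>] 0) (𝓝 η) := by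
  obtain ⟨α, hα, hcoer⟩ := exists_pos_mul_norm_sq_le_inner hApos
  have hApos' : ∀ x, 0 ≤ ⟪x, A x⟫ := fun x => (by positivity : 0 ≤ α * ‖x‖ ^ 2).trans (hcoer x)
  -- the difference quotients stay in a compact ball, so it suffices that `η` is their only
  -- cluster point
  refine (isCompact_closedBall (0 : Euc n) (‖h‖ / α)).tendsto_nhds_of_unique_mapClusterPt ?_ ?_
  · filter_upwards [self_mem_nhdsWithin] with s (hs : 0 < s)
    have := (hS (u + s • h)).mul_norm_sub_le hcoer (hS u)
    rw [add_sub_cancel_left, norm_smul, Real.norm_eq_abs, abs_of_pos hs] at this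
    rw [mem_closedBall_zero_iff, dirQuot, norm_smul, norm_inv, Real.norm_eq_abs, abs_of_pos hs,
      le_div_iff₀ hα]
    calc s⁻¹ * ‖S (u + s • h) - S u‖ * α = s⁻¹ * (α * ‖S (u + s • h) - S u‖) := by ring
      _ ≤ s⁻¹ * (s * ‖h‖) := by gcongr
      _ = ‖h‖ := by field_simp
  · intro L _ hL
    obtain ⟨U, hU, hUL⟩ := mapClusterPt_iff_ultrafilter.mp hL
    obtain ⟨hLmem, hLmin⟩ := mem_Kcone_and_fy_le_of_tendsto hA hApos' hS u h hU hUL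
    have hle := hη.fy_add_le hA hLmem
    have := hLmin η hη.1
    by_contra hne
    linarith [hApos (L - η) (sub_ne_zero.mpr hne)]

end DirectionalDerivative

section Optimality

variable {E : Type*} [NormedAddCommGroup E] [InnerProductSpace ℝ E] [CompleteSpace E]

lemma HasFDerivAt.nonneg_of_curve {F : Type*} [NormedAddCommGroup F] [NormedSpace ℝ F]
    {Φ : F → ℝ} {D : F →L[ℝ] ℝ} {c : ℝ → F} {c' : F} (hΦ : HasFDerivAt Φ D (c 0))
    (hc : HasDerivWithinAt c c' (Set.Ioi 0) 0) (hmin : ∀ᶠ s in 𝓝[>] 0, Φ (c 0) ≤ Φ (c s)) :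
    0 ≤ D c' := by
  have hφ : HasFDerivWithinAt (Φ ∘ c) ((1 : ℝ →L[ℝ] ℝ).smulRight (D c')) (Set.Ioi 0) 0 :=
    hΦ.comp_hasDerivWithinAt 0 hc
  have hone : (1 : ℝ) ∈ posTangentConeAt (Set.Ioi (0 : ℝ)) 0 :=
    mem_posTangentConeAt_of_frequently_mem
      (eventually_mem_nhdsWithin.mono fun t ht => by simpa using ht).frequently
  simpa using IsLocalMinOn.hasFDerivWithinAt_nonneg (f := Φ ∘ c) hmin hφ hone

lemma inner_gradient_add_inner_gradient {J : E → E → ℝ} {D : E × E →L[ℝ] ℝ} {x u : E}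
    (hD : HasFDerivAt (fun p : E × E => J p.1 p.2) D (x, u)) (v h : E) :
    ⟪gradient (fun y => J y u) x, v⟫ + ⟪gradient (fun w => J x w) u, h⟫ = D (v, h) := by
  have hx : HasFDerivAt (fun y => J y u) (D.comp (.inl ℝ E E)) x :=
    (hD.comp x (hasFDerivAt_prodMk_left (𝕜 := ℝ) x u) :)
  have hu : HasFDerivAt (fun w => J x w) (D.comp (.inr ℝ E E)) u :=
    (hD.comp u (hasFDerivAt_prodMk_right (𝕜 := ℝ) x u) :)
  rw [inner_gradient_left, inner_gradient_left, hx.fderiv, hu.fderiv]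
  simp [← map_add]

lemma IsLocalMin.inner_gradient_add_nonneg {J : E → E → ℝ} {S : E → E} {u h η : E}
    (hJ : DifferentiableAt ℝ (fun p : E × E => J p.1 p.2) (S u, u))
    (hmin : IsLocalMin (fun u' => J (S u') u') u)
    (hS : Tendsto (dirQuot S u h) (𝓝[>] 0) (𝓝 η)) :
    0 ≤ ⟪gradient (fun y => J y u) (S u), η⟫ + ⟪gradient (fun w => J (S u) w) u, h⟫ := by
  let c : ℝ → E × E := fun s => (S (u + s • h), u + s • h)
  have hc0 : c 0 = (S u, u) := by simp [c]
  have hline : HasDerivAt (fun s : ℝ => u + s • h) h 0 := by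
    simpa using ((hasDerivAt_id (0 : ℝ)).smul_const h).const_add u
  have hc : HasDerivWithinAt c (η, h) (Set.Ioi 0) 0 := by
    refine HasDerivWithinAt.prodMk ?_ hline.hasDerivWithinAt
    rw [hasDerivWithinAt_iff_tendsto_slope' (by simp)]
    refine hS.congr fun s => ?_
    simp [slope_def_module, dirQuot]
  rw [inner_gradient_add_inner_gradient hJ.hasFDerivAt]
  refine HasFDerivAt.nonneg_of_curve (by rw [hc0]; exact hJ.hasFDerivAt) hc ?_
  have hu : Tendsto (fun s : ℝ => u + s • h) (𝓝[>] 0) (𝓝 u) := by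
    simpa using hline.continuousAt.tendsto.mono_left nhdsWithin_le_nhds
  filter_upwards [hu.eventually hmin] with s hs
  simpa [c] using hs

end Optimality

theorem stmt19_general {n m d : ℕ} (A : Euc n →ₗ[ℝ] Euc n)
    (hAsymm : ∀ x z : Euc n, ⟪A x, z⟫ = ⟪x, A z⟫)
    (hApos : ∀ x : Euc n, x ≠ 0 → 0 < ⟪x, A x⟫)
    (K : Euc n →ₗ[ℝ] Rows m d)
    (S : Euc n → Euc n) (hS : ∀ u' : Euc n, IsVISol A K u' (S u'))
    (J : Euc n → Euc n → ℝ) (hJ : ContDiff ℝ 1 (fun p : Euc n × Euc n => J p.1 p.2))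
    (ubar : Euc n)
    (hmin : ∃ ε : ℝ, 0 < ε ∧ ∀ u : Euc n, ‖u - ubar‖ < ε →
      J (S ubar) ubar ≤ J (S u) u) :
    ∃ (q : Rows m d) (p μ : Euc n),
      A (S ubar) + (LinearMap.adjoint K) q = ubar ∧
      (∀ j, ⟪q j, K (S ubar) j⟫ = ‖K (S ubar) j‖) ∧
      (∀ j, ‖q j‖ ≤ 1) ∧
      (∀ v : Euc n,
        ⟪A p, v⟫ + (∑ j, if K (S ubar) j ≠ 0 then
            ⟪(‖K (S ubar) j‖)⁻¹ •
              (K p j - ((⟪K (S ubar) j, K p j⟫) / ‖K (S ubar) j‖ ^ 2) • K (S ubar) j),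
              K v j⟫
          else 0) =
        ⟪gradient (fun y => J y ubar) (S ubar) - μ, v⟫) ∧
      p ∈ Kcone A K ubar (S ubar) ∧
      (∀ φ ∈ Kcone A K ubar (S ubar), ⟪μ, φ⟫ ≥ 0) ∧
      p + gradient (fun w => J (S ubar) w) ubar = 0 := by
  set ybar := S ubar
  set gy := gradient (fun y => J y ubar) ybar
  set gu := gradient (fun w => J ybar w) ubar
  obtain ⟨q, hq⟩ := (hS ubar).exists_isSlack
  have hloc : IsLocalMin (fun u => J (S u) u) ubar := by
    obtain ⟨ε, hε, hJε⟩ := hmin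
    exact Metric.eventually_nhds_iff.mpr ⟨ε, hε, fun u hu => hJε u (by rwa [← dist_eq_norm])⟩
  have key : ∀ h η, VI1Sol A K ubar ybar h η → 0 ≤ ⟪gy, η⟫ + ⟪gu, h⟫ := fun h η hη =>
    hloc.inner_gradient_add_nonneg ((hJ.differentiable one_ne_zero) _)
      (hη.tendsto_dirQuot hAsymm hApos hS)
  refine ⟨q, -gu, gy - A (-gu) - LinearMap.adjoint K (hessRows (K ybar) (K (-gu))), hq.1, hq.2.1,
    hq.2.2, fun v => ?_, ?_, fun v hv => ?_, neg_add_cancel _⟩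
  · rw [sum_inner_inv_norm_smul_sub_eq_secondForm, ← inner_adjoint_hessRows, ← inner_add_left]
    congr 1
    abel
  · refine mem_Kcone_of_forall_inner_nonneg fun δ hδ => ?_
    simpa [inner_neg_right] using key (-δ) 0 (vi1Sol_zero hδ)
  · have := key _ v (vi1Sol_self hv)
    rw [inner_add_right] at this
    rw [ge_iff_le, inner_sub_left, inner_sub_left, hAsymm, inner_adjoint_hessRows_comm,
      inner_neg_left, inner_neg_left]
    linarith

/-- strong stationarity system for an unconstrained local minimizer. -/
theorem stmt19 {n m d : ℕ} (A : Euc n →ₗ[ℝ] Euc n)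
    (hAsymm : ∀ x z : Euc n, ⟪A x, z⟫ = ⟪x, A z⟫)
    (hApos : ∀ x : Euc n, x ≠ 0 → 0 < ⟪x, A x⟫)
    (K : Euc n →ₗ[ℝ] Rows m d) (hK : Function.Injective K)
    (S : Euc n → Euc n) (hS : ∀ u' : Euc n, IsVISol A K u' (S u'))
    (J : Euc n → Euc n → ℝ) (hJ : ContDiff ℝ 1 (fun p : Euc n × Euc n => J p.1 p.2))
    (ubar : Euc n)
    (hmin : ∃ ε : ℝ, 0 < ε ∧ ∀ u : Euc n, ‖u - ubar‖ < ε →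
      J (S ubar) ubar ≤ J (S u) u) :
    ∃ (q : Rows m d) (p μ : Euc n),
      A (S ubar) + (LinearMap.adjoint K) q = ubar ∧
      (∀ j, ⟪q j, K (S ubar) j⟫ = ‖K (S ubar) j‖) ∧
      (∀ j, ‖q j‖ ≤ 1) ∧
      (∀ v : Euc n,
        ⟪A p, v⟫ + (∑ j, if K (S ubar) j ≠ 0 then
            ⟪(‖K (S ubar) j‖)⁻¹ •
              (K p j - ((⟪K (S ubar) j, K p j⟫) / ‖K (S ubar) j‖ ^ 2) • K (S ubar) j),
              K v j⟫
          else 0) =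
        ⟪gradient (fun y => J y ubar) (S ubar) - μ, v⟫) ∧
      p ∈ Kcone A K ubar (S ubar) ∧
      (∀ φ ∈ Kcone A K ubar (S ubar), ⟪μ, φ⟫ ≥ 0) ∧
      p + gradient (fun w => J (S ubar) w) ubar = 0 :=
  stmt19_general A hAsymm hApos K S hS J hJ ubar hmin
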